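/- There exists ε₀* > 0 depending only on v, d, τ, γ such that for all 0 < ε₀ ≤ ε₀* and all 0 < ε ≤ ε₀ the following holds. There exists μ ∈ {0, 1/2} such that every c₁ ∈ Q₁ satisfies ‖θ* + c₁·ω + μ‖ ≤ 3δ₀^{1/2}. -/

import Mathlib

open scoped InnerProductSpace

/-- `‖t‖`: the distance from a real number `t` to the nearest integer. -/
noncomputable def distToInt (t : ℝ) : ℝ := |t - round t|

/-- The ℓ¹ norm `‖x‖₁ = Σᵢ |xᵢ|` on `ℤ^d`. -/
def nrm1 {d : ℕ} (x : Fin d → ℤ) : ℤ := ∑ i, |x i|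

/-- The dot product `x·ω` for `x ∈ ℤ^d`, `ω ∈ ℝ^d`. -/
noncomputable def dotw {d : ℕ} (x : Fin d → ℤ) (ω : Fin d → ℝ) : ℝ := ∑ i, (x i : ℝ) * ω i

/-- The ℓ¹ norm on `ℝ^d`. -/
noncomputable def nrm1R {d : ℕ} (x : Fin d → ℝ) : ℝ := ∑ i, |x i|

/-- The dot product on `ℝ^d`. -/
noncomputable def dotwR {d : ℕ} (x ω : Fin d → ℝ) : ℝ := ∑ i, x i * ω i

/-- The standing hypotheses on the `C²`-cosine like potential `v` with parameter `a`:
`v` is `C²`, even and `1`-periodic, `0` is a nondegenerate maximum, `1/2` is a nondegenerate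
minimum, these are the only critical points modulo `1`, `|v''| > 3` near `0` and `1/2`
(within distance `a`), and `|v'| > 3` away from `0` and `1/2`. -/
structure CosLike (v : ℝ → ℝ) (a : ℝ) : Prop where
  smooth : ContDiff ℝ 2 v
  even : ∀ θ, v (-θ) = v θ
  periodic : ∀ θ, v (θ + 1) = v θ
  a_pos : 0 < a
  a_lt : a < 1 / 10
  critMax : deriv v 0 = 0
  critMax' : deriv (deriv v) 0 < 0
  critMin : deriv v (1 / 2) = 0
  critMin' : 0 < deriv (deriv v) (1 / 2)
  onlyCrit : ∀ θ ∈ Set.Ico (0 : ℝ) 1, deriv v θ = 0 → θ = 0 ∨ θ = 1 / 2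
  deriv2_big : ∀ θ, (distToInt θ < a ∨ distToInt (θ - 1 / 2) < a) → 3 < |deriv (deriv v) θ|
  deriv_big : ∀ θ, a ≤ distToInt θ → a ≤ distToInt (θ - 1 / 2) → 3 < |deriv v θ|

/-- `M₁ = sup_θ max(|v(θ)|, |v'(θ)|, |v''(θ)|)`. -/
noncomputable def M1 (v : ℝ → ℝ) : ℝ :=
  ⨆ θ : ℝ, max |v θ| (max |deriv v θ| |deriv (deriv v) θ|)

/-- The finite-volume Schrödinger operator `H_Λ(θ) = ε Δ + v(θ + x·ω) δ_{x,y}` as a matrix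
indexed by a finite set `Λ ⊂ ℤ^d`. -/
noncomputable def Hmat {d : ℕ} (ε : ℝ) (v : ℝ → ℝ) (ω : Fin d → ℝ) (θ : ℝ)
    (Λ : Finset (Fin d → ℤ)) : Matrix Λ Λ ℝ :=
  Matrix.of fun x y =>
    if nrm1 (x.1 - y.1) = 1 then ε
    else if x = y then v (θ + dotw x.1 ω) else 0

/-- The discrete ℓ¹-ball `{x ∈ ℤ^d : ‖x − c‖₁ ≤ r}` as a `Finset`. -/
noncomputable def ball1 {d : ℕ} (c : Fin d → ℤ) (r : ℝ) : Finset (Fin d → ℤ) :=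
  (Finset.Icc (fun i => c i - ⌈r⌉) (fun i => c i + ⌈r⌉)).filter
    fun x => ((nrm1 (x - c) : ℤ) : ℝ) ≤ r

/-- The discrete ℓ¹-ball around a (possibly non-integer) center `c ∈ ℝ^d`. -/
noncomputable def ballR {d : ℕ} (c : Fin d → ℝ) (r : ℝ) : Finset (Fin d → ℤ) :=
  (Finset.Icc (fun i => ⌊c i - r⌋ - 1) (fun i => ⌈c i + r⌉ + 1)).filter
    fun x => nrm1R (fun i => (x i : ℝ) - c i) ≤ r

/-- The nearest neighbours of `x` in `ℤ^d`. -/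
noncomputable def nbrs {d : ℕ} (x : Fin d → ℤ) : Finset (Fin d → ℤ) :=
  (Finset.Icc (fun i => x i - 1) (fun i => x i + 1)).filter fun y => nrm1 (y - x) = 1

/-- `δ₀ = ε₀^{1/20}`. -/
noncomputable def delta0 (ε₀ : ℝ) : ℝ := ε₀ ^ ((1 : ℝ) / 20)

/-- `l₁ = |log ε₀|⁴` (Case 2 of the first step). -/
noncomputable def ell1' (ε₀ : ℝ) : ℝ := |Real.log ε₀| ^ 4

/-- `δ₁ = e^{−l₁^{2/3}}`. -/
noncomputable def delta1' (ε₀ : ℝ) : ℝ := Real.exp (-(ell1' ε₀ ^ ((2 : ℝ) / 3)))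

/-!
Write `t = θ* + c₁·ω` and `b = (c_J − c_I)·ω / 2`, so that `θ* + c·ω = t ∓ b` for `c ∈ Q₀`.
The mirror condition `‖2t‖ ≤ 6δ₀^{1/2}` puts `t` within `3δ₀^{1/2}` of `ℤ` or of `ℤ + 1/2`.
Since `v` is even, `1`-periodic and Lipschitz, `|v(θ* + c·ω) − E*| < δ₀` then gives `v(b) ≈ E*`
in the first case and `v(b + 1/2) ≈ E*` in the second, up to `O(δ₀^{1/2})`.
If both cases occurred, `v(b) ≈ v(b + 1/2)`. As `v` decreases on `[0, 1/2]` with slope below `−3`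
on `[1/8, 3/8]`, this forces `‖2(c_J − c_I)·ω‖ = ‖4b‖ = O(δ₀^{1/2}) = O(ε₀^{1/40})`, whereas the
Diophantine condition and `‖c_J − c_I‖₁ ≤ 10|log ε₀|²` bound it below by `γ (20 |log ε₀|²)^{−τ}`.
-/

open Set Filter Topology
open scoped NNReal

lemma distToInt_le_abs_sub_intCast (x : ℝ) (k : ℤ) : distToInt x ≤ |x - k| := round_le x k

lemma distToInt_neg (x : ℝ) : distToInt (-x) = distToInt x := by
  have h : ∀ y : ℝ, distToInt (-y) ≤ distToInt y := fun y => by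
    calc distToInt (-y) ≤ |-y - (-round y : ℤ)| := distToInt_le_abs_sub_intCast _ _
      _ = distToInt y := by rw [distToInt, ← abs_neg]; push_cast; ring_nf
  exact le_antisymm (h x) (by simpa using h (-x))

lemma distToInt_le_or_distToInt_add_half_le {t r : ℝ} (h : distToInt (2 * t) ≤ 2 * r) :
    distToInt t ≤ r ∨ distToInt (t + 1 / 2) ≤ r := by
  have h' : |2 * t - round (2 * t)| ≤ 2 * r := h
  rcases Int.even_or_odd' (round (2 * t)) with ⟨j, hj | hj⟩
  · left
    calc distToInt t ≤ |t - j| := distToInt_le_abs_sub_intCast t j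
      _ ≤ r := by
        rw [hj, Int.cast_mul, Int.cast_two, ← mul_sub, abs_mul, abs_two] at h'
        linarith
  · right
    calc distToInt (t + 1 / 2) ≤ |t + 1 / 2 - (j + 1 : ℤ)| := distToInt_le_abs_sub_intCast _ _
      _ ≤ r := by
        rw [hj, show 2 * t - ((2 * j + 1 : ℤ) : ℝ) = 2 * (t + 1 / 2 - (j + 1 : ℤ)) by
          push_cast; ring, abs_mul, abs_two] at h'
        linarith

section Lattice

variable {d : ℕ}

lemma dotw_add (x y : Fin d → ℤ) (ω : Fin d → ℝ) : dotw (x + y) ω = dotw x ω + dotw y ω := by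
  simp only [dotw, Pi.add_apply, Int.cast_add, add_mul, Finset.sum_add_distrib]

lemma dotw_sub (x y : Fin d → ℤ) (ω : Fin d → ℝ) : dotw (x - y) ω = dotw x ω - dotw y ω := by
  simp only [dotw, Pi.sub_apply, Int.cast_sub, sub_mul, Finset.sum_sub_distrib]

lemma dotw_zsmul (n : ℤ) (x : Fin d → ℤ) (ω : Fin d → ℝ) : dotw (n • x) ω = n * dotw x ω := by
  simp only [dotw, Pi.smul_apply, smul_eq_mul, Int.cast_mul, Finset.mul_sum, mul_assoc]

lemma dotwR_midpoint (c ctil : Fin d → ℤ) (ω : Fin d → ℝ) :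
    dotwR (fun i => ((c i + ctil i : ℤ) : ℝ) / 2) ω = dotw (c + ctil) ω / 2 := by
  simp only [dotwR, dotw, Pi.add_apply, Finset.sum_div, div_mul_eq_mul_div]

lemma add_dotw_eq_of_mirror (θ : ℝ) (ω : Fin d → ℝ) {c ctil δ : Fin d → ℤ}
    (h : ctil = c + δ ∨ ctil = c - δ) :
    θ + dotw c ω = θ + dotwR (fun i => ((c i + ctil i : ℤ) : ℝ) / 2) ω - dotw δ ω / 2 ∨
      θ + dotw c ω = θ + dotwR (fun i => ((c i + ctil i : ℤ) : ℝ) / 2) ω + dotw δ ω / 2 := by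
  rw [dotwR_midpoint, dotw_add]
  rcases h with rfl | rfl
  · left; rw [dotw_add]; ring
  · right; rw [dotw_sub]; ring

lemma nrm1_zsmul (n : ℤ) (x : Fin d → ℤ) : nrm1 (n • x) = |n| * nrm1 x := by
  simp only [nrm1, Pi.smul_apply, smul_eq_mul, abs_mul, Finset.mul_sum]

lemma nrm1_sub_comm (x y : Fin d → ℤ) : nrm1 (x - y) = nrm1 (y - x) := by
  simp only [nrm1, Pi.sub_apply, abs_sub_comm]

lemma one_le_nrm1 {x : Fin d → ℤ} (hx : x ≠ 0) : 1 ≤ nrm1 x := by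
  obtain ⟨i, hi⟩ := Function.ne_iff.mp hx
  exact (Int.one_le_abs hi).trans
    (Finset.single_le_sum (fun j _ => abs_nonneg (x j)) (Finset.mem_univ i))

lemma le_mul_rpow_of_distToInt_dotw_le {ω : Fin d → ℝ} {γ τ η N : ℝ} (hτ : 0 ≤ τ)
    (hDC : ∀ x : Fin d → ℤ, x ≠ 0 → γ / (nrm1 x : ℝ) ^ τ ≤ distToInt (dotw x ω))
    {x : Fin d → ℤ} (hx : x ≠ 0) (hxN : (nrm1 x : ℝ) ≤ N) (h : distToInt (dotw x ω) ≤ η) :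
    γ ≤ η * N ^ τ := by
  have hx₁ : (1 : ℝ) ≤ nrm1 x := by exact_mod_cast one_le_nrm1 hx
  have hη : 0 ≤ η := (abs_nonneg _).trans h
  calc γ ≤ η * (nrm1 x : ℝ) ^ τ :=
        (div_le_iff₀ (Real.rpow_pos_of_pos (by linarith) τ)).mp ((hDC x hx).trans h)
    _ ≤ η * N ^ τ := mul_le_mul_of_nonneg_left (Real.rpow_le_rpow (by linarith) hxN hτ) hη

end Lattice

section EvenPeriodic

variable {v : ℝ → ℝ} {K : ℝ≥0} {d : ℕ}

lemma abs_sub_le_mul_distToInt_sub (hper : Function.Periodic v 1) (hlip : LipschitzWith K v)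
    (x y : ℝ) : |v x - v y| ≤ K * distToInt (x - y) := by
  have hshift : v (y + round (x - y)) = v y := by simpa using hper.int_mul (round (x - y)) y
  calc |v x - v y| = |v x - v (y + round (x - y))| := by rw [hshift]
    _ ≤ K * |x - (y + round (x - y))| := by simpa [Real.dist_eq] using hlip.dist_le_mul x _
    _ = K * distToInt (x - y) := by rw [distToInt, sub_sub]

lemma abs_sub_le_mul_distToInt_add (hper : Function.Periodic v 1) (heven : Function.Even v)
    (hlip : LipschitzWith K v) (x y : ℝ) : |v x - v y| ≤ K * distToInt (x + y) := by
  simpa [heven y] using abs_sub_le_mul_distToInt_sub hper hlip x (-y)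

lemma abs_sub_le_mul_distToInt_of_mirror (hper : Function.Periodic v 1) (heven : Function.Even v)
    (hlip : LipschitzWith K v) {μ t b y : ℝ} (hμ : μ = 0 ∨ μ = 1 / 2)
    (hy : y = t - b ∨ y = t + b) : |v (μ + b) - v y| ≤ K * distToInt (t + μ) := by
  rcases hy with rfl | rfl
  · simpa [add_comm, add_left_comm] using
      abs_sub_le_mul_distToInt_add hper heven hlip (μ + b) (t - b)
  · have hμb : v (μ + b) = v (b - μ) := by
      rcases hμ with rfl | rfl
      · simp
      · rw [← hper (b - 1 / 2)]
        ring_nf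
    rw [hμb, ← distToInt_neg]
    convert abs_sub_le_mul_distToInt_sub hper hlip (b - μ) (t + b) using 3
    ring

lemma apply_half_add_eq_apply_half_sub (hper : Function.Periodic v 1) (heven : Function.Even v)
    (s : ℝ) : v (1 / 2 + s) = v (1 / 2 - s) := by
  rw [← heven, ← hper]
  ring_nf

lemma distToInt_midpoint_le_or {θ r : ℝ} {ω : Fin d → ℝ} {c ctil : Fin d → ℤ}
    (h : distToInt (2 * θ + dotw (c + ctil) ω) ≤ 2 * r) :
    distToInt (θ + dotwR (fun i => ((c i + ctil i : ℤ) : ℝ) / 2) ω) ≤ r ∨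
      distToInt (θ + dotwR (fun i => ((c i + ctil i : ℤ) : ℝ) / 2) ω + 1 / 2) ≤ r := by
  refine distToInt_le_or_distToInt_add_half_le ?_
  rwa [dotwR_midpoint, mul_add, mul_div_cancel₀ _ two_ne_zero]

lemma abs_sub_le_of_mirror (hper : Function.Periodic v 1) (heven : Function.Even v)
    (hlip : LipschitzWith K v) {θ E δ r μ : ℝ} {ω : Fin d → ℝ} {c ctil δc : Fin d → ℤ}
    (hμ : μ = 0 ∨ μ = 1 / 2) (hc : |v (θ + dotw c ω) - E| < δ)
    (hmir : ctil = c + δc ∨ ctil = c - δc)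
    (ht : distToInt (θ + dotwR (fun i => ((c i + ctil i : ℤ) : ℝ) / 2) ω + μ) ≤ r) :
    |v (μ + dotw δc ω / 2) - E| ≤ δ + K * r := by
  have hmove := abs_sub_le_mul_distToInt_of_mirror hper heven hlip hμ
    (add_dotw_eq_of_mirror θ ω hmir)
  calc |v (μ + dotw δc ω / 2) - E|
      ≤ |v (μ + dotw δc ω / 2) - v (θ + dotw c ω)| + |v (θ + dotw c ω) - E| := abs_sub_le _ _ _
    _ ≤ K * r + δ := add_le_add (hmove.trans (mul_le_mul_of_nonneg_left ht K.2)) hc.le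
    _ = δ + K * r := add_comm _ _

end EvenPeriodic

namespace CosLike

variable {v : ℝ → ℝ} {a : ℝ}

lemma differentiable (hv : CosLike v a) : Differentiable ℝ v :=
  hv.smooth.differentiable (by norm_num)

lemma continuous_deriv (hv : CosLike v a) : Continuous (deriv v) :=
  hv.smooth.continuous_deriv (by norm_num)

lemma periodic_deriv (hv : CosLike v a) : Function.Periodic (deriv v) 1 := fun x => by
  rw [← deriv_comp_add_const]
  exact congrArg (deriv · x) (funext hv.periodic)

lemma exists_lipschitzWith (hv : CosLike v a) : ∃ K, LipschitzWith K v := by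
  obtain ⟨C, hC⟩ := isBounded_iff_forall_norm_le.mp
    (hv.periodic_deriv.isBounded_of_continuous one_ne_zero hv.continuous_deriv)
  refine ⟨C.toNNReal, lipschitzWith_of_nnnorm_deriv_le hv.differentiable fun x => ?_⟩
  rw [← NNReal.coe_le_coe, coe_nnnorm, Real.coe_toNNReal']
  exact (hC _ ⟨x, rfl⟩).trans (le_max_left _ _)

/-- Near `0` the sign of `v'` is read off from `v''(0) < 0`; it cannot change on `(0, 1/2)`
because `v'` has no zero there. -/
lemma deriv_neg_of_mem_Ioo (hv : CosLike v a) {θ : ℝ} (hθ : θ ∈ Ioo (0 : ℝ) (1 / 2)) :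
    deriv v θ < 0 := by
  have hne : ∀ x ∈ Ioo (0 : ℝ) (1 / 2), deriv v x ≠ 0 := fun x hx h0 => by
    rcases hv.onlyCrit x ⟨hx.1.le, by linarith [hx.2]⟩ h0 with rfl | rfl
    · exact lt_irrefl _ hx.1
    · exact lt_irrefl _ hx.2
  obtain ⟨x₀, hx₀, hx₀I⟩ : ∃ x₀, deriv v x₀ < 0 ∧ x₀ ∈ Ioo (0 : ℝ) (1 / 2) :=
    ((deriv_neg_right_of_sign_deriv (eventually_nhdsWithin_of_eventually_nhds
      (eventually_nhdsWithin_sign_eq_of_deriv_neg hv.critMax' hv.critMax))).and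
      (Ioo_mem_nhdsGT (by norm_num))).exists
  by_contra! hθ0
  obtain ⟨ξ, hξ, hξ0⟩ := isPreconnected_Ioo.intermediate_value hx₀I hθ
    hv.continuous_deriv.continuousOn ⟨hx₀.le, hθ0⟩
  exact hne ξ hξ hξ0

lemma antitoneOn (hv : CosLike v a) : AntitoneOn v (Icc 0 (1 / 2)) :=
  antitoneOn_of_deriv_nonpos (convex_Icc _ _) hv.differentiable.continuous.continuousOn
    hv.differentiable.differentiableOn fun x hx =>
      (hv.deriv_neg_of_mem_Ioo (by rwa [interior_Icc] at hx)).le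

lemma deriv_lt_neg_three (hv : CosLike v a) {θ : ℝ} (hθ : θ ∈ Icc (1 / 8 : ℝ) (3 / 8)) :
    deriv v θ < -3 := by
  obtain ⟨hθ₁, hθ₂⟩ := hθ
  have hround : round θ = 0 := round_eq_zero_iff.mpr ⟨by linarith, by linarith⟩
  have hround' : round (θ - 1 / 2) = 0 := round_eq_zero_iff.mpr ⟨by linarith, by linarith⟩
  have hbig := hv.deriv_big θ
    (by rw [distToInt, hround, Int.cast_zero, sub_zero, abs_of_pos (by linarith)]
        linarith [hv.a_lt])
    (by rw [distToInt, hround', Int.cast_zero, sub_zero, abs_of_neg (by linarith)]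
        linarith [hv.a_lt])
  rw [abs_of_neg (hv.deriv_neg_of_mem_Ioo ⟨by linarith, by linarith⟩)] at hbig
  linarith

lemma three_mul_sub_le_sub (hv : CosLike v a) {p q : ℝ} (hp : 1 / 8 ≤ p) (hpq : p ≤ q)
    (hq : q ≤ 3 / 8) : 3 * (q - p) ≤ v p - v q := by
  have := (convex_Icc (1 / 8 : ℝ) (3 / 8)).image_sub_le_mul_sub_of_deriv_le
    hv.differentiable.continuous.continuousOn hv.differentiable.differentiableOn
    (fun x hx => (hv.deriv_lt_neg_three (interior_subset hx)).le)
    p ⟨hp, hpq.trans hq⟩ q ⟨hp.trans hpq, hq⟩ hpq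
  linarith

lemma one_sub_four_mul_le (hv : CosLike v a) {s η : ℝ} (hs₀ : 0 ≤ s) (hs : s ≤ 1 / 4)
    (hη : η < 3 / 4) (h : v s - v (1 / 2 - s) ≤ η) : 1 - 4 * s ≤ η := by
  rcases lt_or_ge s (1 / 8) with hs₈ | hs₈
  · have h₁ : v (1 / 8) ≤ v s :=
      hv.antitoneOn ⟨hs₀, by linarith⟩ ⟨by norm_num, by norm_num⟩ hs₈.le
    have h₂ : v (1 / 2 - s) ≤ v (3 / 8) :=
      hv.antitoneOn ⟨by norm_num, by norm_num⟩ ⟨by linarith, by linarith⟩ (by linarith)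
    have h₃ := hv.three_mul_sub_le_sub (p := 1 / 8) (q := 3 / 8) le_rfl (by norm_num) le_rfl
    linarith
  · linarith [hv.three_mul_sub_le_sub hs₈ (by linarith : s ≤ 1 / 2 - s) (by linarith)]

lemma abs_four_mul_sub_one_le (hv : CosLike v a) {s η : ℝ} (hs₀ : 0 ≤ s) (hs : s ≤ 1 / 2)
    (hη : η < 3 / 4) (h : |v s - v (1 / 2 - s)| ≤ η) : |4 * s - 1| ≤ η := by
  rcases le_total s (1 / 4) with hs₄ | hs₄
  · rw [abs_of_nonpos (by linarith)]
    linarith [hv.one_sub_four_mul_le hs₀ hs₄ hη ((le_abs_self _).trans h)]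
  · rw [abs_of_nonneg (by linarith)]
    have h' : v (1 / 2 - s) - v (1 / 2 - (1 / 2 - s)) ≤ η := by
      rw [sub_sub_cancel, ← abs_sub_comm] at *
      exact (le_abs_self _).trans h
    linarith [hv.one_sub_four_mul_le (by linarith) (by linarith) hη h']

lemma distToInt_four_mul_le (hv : CosLike v a) {x η : ℝ} (hη : η < 3 / 4)
    (h : |v x - v (x + 1 / 2)| ≤ η) : distToInt (4 * x) ≤ η := by
  set k := round x
  set r := x - k
  have hr : |r| ≤ 1 / 2 := abs_sub_round x
  have hx : v x = v r := (Function.Periodic.sub_int_mul_eq hv.periodic k).symm.trans (by simp [r])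
  have hx' : v (x + 1 / 2) = v (1 / 2 + r) :=
    (Function.Periodic.sub_int_mul_eq hv.periodic k).symm.trans (by simp only [r]; ring_nf)
  have key := hv.abs_four_mul_sub_one_le (abs_nonneg r) hr hη
  rw [hx, hx'] at h
  rcases abs_cases r with ⟨hrabs, hr₀⟩ | ⟨hrabs, hr₀⟩
  · rw [apply_half_add_eq_apply_half_sub hv.periodic hv.even] at h
    rw [hrabs] at key
    calc distToInt (4 * x) ≤ |4 * x - (4 * k + 1 : ℤ)| := distToInt_le_abs_sub_intCast _ _
      _ = |4 * r - 1| := by simp only [r]; push_cast; ring_nf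
      _ ≤ η := key h
  · rw [← hv.even r, ← sub_neg_eq_add] at h
    rw [hrabs] at key
    calc distToInt (4 * x) ≤ |4 * x - (4 * k - 1 : ℤ)| := distToInt_le_abs_sub_intCast _ _
      _ = |4 * -r - 1| := by rw [← abs_neg]; simp only [r]; push_cast; ring_nf
      _ ≤ η := key h

end CosLike

lemma tendsto_exp_neg_div_mul_rpow_atTop (τ : ℝ) :
    Tendsto (fun L : ℝ => Real.exp (-L / 40) * (20 * L ^ 2) ^ τ) atTop (𝓝 0) := by
  have h := (tendsto_rpow_mul_exp_neg_mul_atTop_nhds_zero (2 * τ) (1 / 40) (by norm_num)).const_mul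
    ((20 : ℝ) ^ τ)
  rw [mul_zero] at h
  refine h.congr' ?_
  filter_upwards [eventually_ge_atTop 0] with L hL
  rw [Real.mul_rpow (by norm_num) (sq_nonneg L), ← Real.rpow_natCast, ← Real.rpow_mul hL]
  ring_nf

lemma eventually_mul_exp_log_div_mul_rpow_lt (C τ : ℝ) {γ : ℝ} (hγ : 0 < γ) :
    ∀ᶠ ε in 𝓝[>] (0 : ℝ), C * Real.exp (Real.log ε / 40) * (20 * Real.log ε ^ 2) ^ τ < γ := by
  have h := ((tendsto_exp_neg_div_mul_rpow_atTop τ).comp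
    (tendsto_neg_atBot_atTop.comp Real.tendsto_log_nhdsGT_zero)).const_mul C
  rw [mul_zero] at h
  filter_upwards [h.eventually (gt_mem_nhds hγ)] with ε hε
  simpa [neg_div, mul_assoc] using hε

lemma delta0_rpow_half {ε : ℝ} (hε : 0 < ε) :
    delta0 ε ^ ((1 : ℝ) / 2) = Real.exp (Real.log ε / 40) := by
  rw [delta0, ← Real.rpow_mul hε.le, Real.rpow_def_of_pos hε]
  ring_nf

lemma delta0_le_delta0_rpow_half {ε : ℝ} (hε₀ : 0 < ε) (hε₁ : ε ≤ 1) :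
    delta0 ε ≤ delta0 ε ^ ((1 : ℝ) / 2) := by
  have h := Real.rpow_le_rpow_of_exponent_ge (Real.rpow_pos_of_pos hε₀ (1 / 20))
    (Real.rpow_le_one hε₀.le hε₁ (by norm_num)) (by norm_num : (1 : ℝ) / 2 ≤ 1)
  rwa [Real.rpow_one] at h

lemma exists_small_scale (C τ : ℝ) {γ : ℝ} (hγ : 0 < γ) :
    ∃ ε₀star > (0 : ℝ), ∀ ε₀, 0 < ε₀ → ε₀ ≤ ε₀star → ε₀ < 1 ∧
      C * delta0 ε₀ ^ ((1 : ℝ) / 2) < 3 / 4 ∧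
      C * delta0 ε₀ ^ ((1 : ℝ) / 2) * (20 * Real.log ε₀ ^ 2) ^ τ < γ := by
  obtain ⟨u, hu, hsub⟩ := mem_nhdsGT_iff_exists_Ioc_subset.mp <|
    (eventually_nhdsWithin_of_eventually_nhds (eventually_lt_nhds zero_lt_one)).and <|
      (eventually_mul_exp_log_div_mul_rpow_lt C 0 (by norm_num : (0 : ℝ) < 3 / 4)).and
        (eventually_mul_exp_log_div_mul_rpow_lt C τ hγ)
  refine ⟨u, hu, fun ε₀ h₀ hle => ?_⟩
  obtain ⟨h₁, h₂, h₃⟩ := hsub ⟨h₀, hle⟩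
  rw [delta0_rpow_half h₀]
  exact ⟨h₁, by simpa using h₂, h₃⟩

/-- in the clustered case there is `μ ∈ {0, 1/2}` such that every `c₁ ∈ Q₁`
satisfies `‖θ* + c₁·ω + μ‖ ≤ 3δ₀^{1/2}`. Here points of `Q₁` are the half-integer points
`c₁ = (c + c̃)/2` with `c ∈ Q₀`, `c̃` its mirror image, and
`dist(σ(H_{B₁(c₁)}(θ*)), E*) < δ₁`. -/
theorem statement7 (v : ℝ → ℝ) (a : ℝ) (hv : CosLike v a) (d : ℕ) (τ γ : ℝ)
    (hτ : (d : ℝ) < τ) (hγ : 0 < γ) :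
    ∃ ε₀star > (0 : ℝ), ∀ ε₀ ε : ℝ, 0 < ε₀ → ε₀ ≤ ε₀star → 0 < ε → ε ≤ ε₀ →
      ∀ ω : Fin d → ℝ, (∀ i, ω i ∈ Set.Icc (0 : ℝ) 1) →
      (∀ x : Fin d → ℤ, x ≠ 0 → γ / (nrm1 x : ℝ) ^ τ ≤ distToInt (dotw x ω)) →
      ∀ θs Es : ℝ, ∀ cI cJ : Fin d → ℤ, cI ≠ cJ →
        |v (θs + dotw cI ω) - Es| < delta0 ε₀ →
        |v (θs + dotw cJ ω) - Es| < delta0 ε₀ →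
        -- `‖c_I − c_J‖₁` realizes the infimum `s₀`
        (∀ x y : Fin d → ℤ, x ≠ y → |v (θs + dotw x ω) - Es| < delta0 ε₀ →
          |v (θs + dotw y ω) - Es| < delta0 ε₀ → nrm1 (cI - cJ) ≤ nrm1 (x - y)) →
        -- `s₀ ≤ 10|log ε₀|²`
        (nrm1 (cI - cJ) : ℝ) ≤ 10 * |Real.log ε₀| ^ 2 →
        ∃ μ ∈ ({0, 1 / 2} : Set ℝ), ∀ c ctil : Fin d → ℤ,
          -- `c ∈ Q₀` with mirror image `c̃`
          |v (θs + dotw c ω) - Es| < delta0 ε₀ →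
          (ctil = c + (cJ - cI) ∨ ctil = c - (cJ - cI)) →
          distToInt (2 * θs + dotw (c + ctil) ω) ≤ 6 * delta0 ε₀ ^ ((1 : ℝ) / 2) →
          -- `c₁ = (c + c̃)/2 ∈ Q₁`
          (∃ μ' ∈ spectrum ℝ
              (Hmat ε v ω θs (ballR (fun i => ((c i + ctil i : ℤ) : ℝ) / 2) (ell1' ε₀))),
            |μ' - Es| < delta1' ε₀) →
          distToInt (θs + dotwR (fun i => ((c i + ctil i : ℤ) : ℝ) / 2) ω + μ)
            ≤ 3 * delta0 ε₀ ^ ((1 : ℝ) / 2) := by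
  obtain ⟨K, hK⟩ := hv.exists_lipschitzWith
  obtain ⟨ε₀star, hε₀star, hscale⟩ := exists_small_scale (2 + 6 * K) τ hγ
  refine ⟨ε₀star, hε₀star, fun ε₀ ε hε₀ hε₀le _ _ ω _ hDC θs Es cI cJ hIJ _ _ _ hs₀ => ?_⟩
  obtain ⟨hε₀₁, hsmall, hdio⟩ := hscale ε₀ hε₀ hε₀le
  set D := delta0 ε₀ ^ ((1 : ℝ) / 2)
  have hδD : delta0 ε₀ ≤ D := delta0_le_delta0_rpow_half hε₀ hε₀₁.le
  set b := dotw (cJ - cI) ω / 2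
  by_contra! hfar
  obtain ⟨c, ctil, hc, hmir, h2, -, hfar₀⟩ := hfar 0 (by simp)
  obtain ⟨c', ctil', hc', hmir', h2', -, hfar₁⟩ := hfar (1 / 2) (by simp)
  have ht₁ := (distToInt_midpoint_le_or (r := 3 * D) (h2.trans_eq (by ring))).resolve_left
    (by simpa using hfar₀)
  have ht₀ := (distToInt_midpoint_le_or (r := 3 * D) (h2'.trans_eq (by ring))).resolve_right
    hfar₁.not_ge
  have hb₁ : |v (b + 1 / 2) - Es| ≤ delta0 ε₀ + K * (3 * D) := by
    rw [add_comm]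
    exact abs_sub_le_of_mirror hv.periodic hv.even hK (Or.inr rfl) hc hmir ht₁
  have hb₀ : |v b - Es| ≤ delta0 ε₀ + K * (3 * D) := by
    simpa using abs_sub_le_of_mirror hv.periodic hv.even hK (Or.inl rfl) hc' hmir'
      (by simpa using ht₀)
  have h4b : distToInt (dotw ((2 : ℤ) • (cJ - cI)) ω) ≤ (2 + 6 * K) * D := by
    rw [dotw_zsmul, show ((2 : ℤ) : ℝ) * dotw (cJ - cI) ω = 4 * b by simp only [b]; ring]
    refine hv.distToInt_four_mul_le (by linarith) ((abs_sub_le _ Es _).trans ?_)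
    rw [abs_sub_comm Es]
    linarith
  have hN : (nrm1 ((2 : ℤ) • (cJ - cI)) : ℝ) ≤ 20 * Real.log ε₀ ^ 2 := by
    rw [nrm1_zsmul, abs_two, nrm1_sub_comm, ← sq_abs (Real.log ε₀)]
    push_cast
    linarith
  have h2ne : (2 : ℤ) • (cJ - cI) ≠ 0 := smul_ne_zero two_ne_zero (sub_ne_zero.mpr hIJ.symm)
  exact (le_mul_rpow_of_distToInt_dotw_le ((Nat.cast_nonneg d).trans hτ.le) hDC h2ne hN h4b).not_gt
    hdio
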